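/- Up to strong computable equivalence, f ⊞ g ≡_sc f ⊔ g for all partial multifunctions f, g on Cantor space; consequently the strong computable degrees form a distributive lattice with ⊔ as join and ⊓ as meet. -/

import Mathlib

attribute [local instance] Classical.propDecidable

namespace StrongWeihrauch

noncomputable section

/-! ### Cantor space, monotone approximations, and the evaluation map -/

/-- Cantor space `2^ω`; we identify subsets of `ω` with their characteristic functions. -/
abbrev Cantor : Type := ℕ → Bool

/-- The coded triple `⟨n,s,i⟩`. -/
def tpl (n s i : ℕ) : ℕ := Nat.pair n (Nat.pair s i)

/-- A monotone approximation (Definition 3.1): every element has the form `⟨n,s,i⟩` with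
`i < 2`; for each `n` there is at most one pair `(s,i)` with `⟨n,s,i⟩ ∈ a`; and the stages `s`
are strictly increasing in `n`. -/
def MonotoneApprox (a : Cantor) : Prop :=
  (∀ k, a k = true → ∃ n s i, i < 2 ∧ k = tpl n s i) ∧
  (∀ n s t i j, a (tpl n s i) = true → a (tpl n t j) = true → s = t ∧ i = j) ∧
  (∀ m n s t i j, a (tpl m s i) = true → a (tpl n t j) = true → m < n → s < t)

/-- A total monotone approximation: every `n` gets a value. -/
def TotalMonotoneApprox (a : Cantor) : Prop :=
  MonotoneApprox a ∧ ∀ n, ∃ s i, i < 2 ∧ a (tpl n s i) = true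

/-- The value of the evaluation map `e` on a (total) monotone approximation:
`eVal a n = i` iff `⟨n,s,i⟩ ∈ a` for some `s`. -/
def eVal (a : Cantor) : Cantor := fun n => decide (∃ s, a (tpl n s 1) = true)

/-- The evaluation map `e : ⊆ 2^ω → 2^ω`, the partial function whose domain is the set of
total monotone approximations `a`, with `e(a)(n) = i` iff `⟨n,s,i⟩ ∈ a` for some `s`. -/
def evalMA : Cantor →. Cantor := fun a => ⟨TotalMonotoneApprox a, fun _ => eVal a⟩

/-! ### Turing functionals -/

/-- The oracle information available at stage `s`: the first `s` bits of `p`. -/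
def initSeg (p : Cantor) (s : ℕ) : List Bool := (List.range s).map p

/-- A `{0,1}`-valued Turing functional on Cantor space, presented by a computable monotone
finite-prefix approximation: `approx σ n = some b` means that the computation on input `n`
with oracle prefix `σ` has converged, with output `b`. -/
structure TuringFunctional where
  approx : List Bool → ℕ → Option Bool
  computable : Computable₂ approx
  mono : ∀ σ τ n b, σ <+: τ → approx σ n = some b → approx τ n = some b

namespace TuringFunctional

/-- `Φ^p(n)[s]↓`. -/
def ConvAt (Φ : TuringFunctional) (p : Cantor) (n s : ℕ) : Prop :=
  (Φ.approx (initSeg p s) n).isSome = true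

/-- `s` is least such that `Φ^p(n)[s]↓`. -/
def LeastStage (Φ : TuringFunctional) (p : Cantor) (n s : ℕ) : Prop :=
  Φ.ConvAt p n s ∧ ∀ t, t < s → ¬ Φ.ConvAt p n t

/-- Convention 2.1: if `Φ^p(n)[s]↓` then `Φ^p(m)[s]↓` for all `m < n`, and for each `s`
there is at most one `n` for which `s` is least with `Φ^p(n)[s]↓`. -/
def Convention (Φ : TuringFunctional) : Prop :=
  (∀ (p : Cantor) (s n m : ℕ), m < n → Φ.ConvAt p n s → Φ.ConvAt p m s) ∧
  (∀ (p : Cantor) (s n n' : ℕ), Φ.LeastStage p n s → Φ.LeastStage p n' s → n = n')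

/-- The partial function `⊆ 2^ω → 2^ω` computed by `Φ`; it is defined at `p` exactly when
`Φ(p)` is total, in which case its value is the map `n ↦ Φ^p(n)`. -/
def eval (Φ : TuringFunctional) : Cantor →. Cantor :=
  fun p => ⟨∀ n, ∃ s b, Φ.approx (initSeg p s) n = some b,
    fun h n => (h n).choose_spec.choose⟩

end TuringFunctional

/-- `a_{Φ(p)}`: the set of all `⟨n,s,i⟩` where `s` is least such that `Φ^p(n)[s]↓ = i`. -/
def approxSeq (Φ : TuringFunctional) (p : Cantor) : Cantor := fun k =>
  decide (∃ n s b, k = tpl n s (Bool.toNat b) ∧ Φ.LeastStage p n s ∧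
    Φ.approx (initSeg p s) n = some b)

/-- Turing reducibility `q ≤_T p` on Cantor space. -/
def TuringLe (q p : Cantor) : Prop := ∃ Φ : TuringFunctional, Φ.eval p = Part.some q

/-! ### Pairing on Cantor space -/

/-- The effective join `⟨p,q⟩` on Cantor space. -/
def pairC (p q : Cantor) : Cantor := fun n => if n % 2 = 0 then p (n / 2) else q (n / 2)

def leftC (r : Cantor) : Cantor := fun n => r (2 * n)

def rightC (r : Cantor) : Cantor := fun n => r (2 * n + 1)

/-- The singleton `{i} ⊆ ω` as an element of Cantor space. -/
def natSet (i : ℕ) : Cantor := fun n => decide (n = i)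

/-- `⟨i,p⟩`, i.e. `⟨{i},p⟩`. -/
def inC (i : ℕ) (p : Cantor) : Cantor := pairC (natSet i) p

lemma leftC_pairC (p q : Cantor) : leftC (pairC p q) = p := by
  funext n
  have h1 : 2 * n % 2 = 0 := by omega
  have h2 : 2 * n / 2 = n := by omega
  simp [leftC, pairC, h1, h2]

lemma rightC_pairC (p q : Cantor) : rightC (pairC p q) = q := by
  funext n
  have h1 : (2 * n + 1) % 2 = 1 := by omega
  have h2 : (2 * n + 1) / 2 = n := by omega
  simp [rightC, pairC, h1, h2]

lemma tpl_inj {n s i n' s' i' : ℕ} (h : tpl n s i = tpl n' s' i') :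
    n = n' ∧ s = s' ∧ i = i' := by
  unfold tpl at h
  rw [Nat.pair_eq_pair] at h
  rcases h with ⟨h1, h2⟩
  rw [Nat.pair_eq_pair] at h2
  exact ⟨h1, h2.1, h2.2⟩

lemma toNat_lt_two (b : Bool) : b.toNat < 2 := by cases b <;> decide

/-- Encoding of `q ∈ 2^ω` as a total monotone approximation evaluating to `q`. -/
def maEncode (q : Cantor) : Cantor := fun k => decide (∃ n, k = tpl n n (q n).toNat)

lemma maEncode_mem {q : Cantor} {k : ℕ} :
    maEncode q k = true ↔ ∃ n, k = tpl n n (q n).toNat := by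
  simp [maEncode]

lemma maEncode_total (q : Cantor) : TotalMonotoneApprox (maEncode q) := by
  refine ⟨⟨?_, ?_, ?_⟩, ?_⟩
  · intro k hk
    obtain ⟨n, rfl⟩ := maEncode_mem.mp hk
    exact ⟨n, n, (q n).toNat, toNat_lt_two _, rfl⟩
  · intro n s t i j h1 h2
    obtain ⟨m, hm⟩ := maEncode_mem.mp h1
    obtain ⟨m', hm'⟩ := maEncode_mem.mp h2
    obtain ⟨e1, e2, e3⟩ := tpl_inj hm
    obtain ⟨f1, f2, f3⟩ := tpl_inj hm'
    have hmm' : m = m' := by omega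
    refine ⟨by omega, by rw [e3, f3, hmm']⟩
  · intro m n s t i j h1 h2 hmn
    obtain ⟨u, hu⟩ := maEncode_mem.mp h1
    obtain ⟨v, hv⟩ := maEncode_mem.mp h2
    obtain ⟨e1, e2, _⟩ := tpl_inj hu
    obtain ⟨f1, f2, _⟩ := tpl_inj hv
    omega
  · intro n
    exact ⟨n, (q n).toNat, toNat_lt_two _, maEncode_mem.mpr ⟨n, rfl⟩⟩

lemma eVal_maEncode (q : Cantor) : eVal (maEncode q) = q := by
  funext n
  have hiff : (∃ s, maEncode q (tpl n s 1) = true) ↔ q n = true := by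
    constructor
    · rintro ⟨s, hs⟩
      obtain ⟨m, hm⟩ := maEncode_mem.mp hs
      obtain ⟨e1, e2, e3⟩ := tpl_inj hm
      subst e1
      cases hq : q n
      · rw [hq] at e3; simp at e3
      · rfl
    · intro hq
      refine ⟨n, maEncode_mem.mpr ⟨n, ?_⟩⟩
      rw [hq]
      rfl
  cases hq : q n
  · have hne : ¬ (∃ s, maEncode q (tpl n s 1) = true) := by
      intro h
      have ht := hiff.mp h
      rw [ht] at hq
      exact Bool.noConfusion hq
    simp [eVal, hne]
  · simp [eVal, hiff.mpr hq]

/-- An explicit non-(monotone approximation). -/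
def badMA : Cantor := fun k => decide (k = tpl 0 0 0 ∨ k = tpl 0 1 0)

lemma badMA_not : ¬ TotalMonotoneApprox badMA := by
  rintro ⟨⟨-, h2, -⟩, -⟩
  have ha : badMA (tpl 0 0 0) = true := by simp [badMA]
  have hb : badMA (tpl 0 1 0) = true := by simp [badMA]
  have := (h2 0 0 1 0 0 ha hb).1
  omega

/-! ### Represented spaces -/

/-- A represented space: a set `X` together with a partial surjection `δ : ⊆ 2^ω → X`. -/
structure RepSp : Type 1 where
  X : Type
  δ : Cantor →. X
  surj : ∀ x : X, ∃ p, x ∈ δ p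

namespace RepSp

/-- The product representation of `X₀ × X₁`: `δ(⟨p₀,p₁⟩) = (δ₀(p₀), δ₁(p₁))`. -/
def prod (A B : RepSp) : RepSp where
  X := A.X × B.X
  δ := fun r => (A.δ (leftC r)).bind fun x => (B.δ (rightC r)).map fun y => (x, y)
  surj := by
    rintro ⟨x, y⟩
    obtain ⟨p, hp⟩ := A.surj x
    obtain ⟨q, hq⟩ := B.surj y
    refine ⟨pairC p q, ?_⟩
    simp only [leftC_pairC, rightC_pairC, Part.mem_bind_iff]
    exact ⟨x, hp, Part.mem_map _ hq⟩

/-- The disjoint-union representation of `X₀ ⊔ X₁`: `δ(⟨i,p⟩) = ⟨i, δᵢ(p)⟩`. -/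
def sum (A B : RepSp) : RepSp where
  X := A.X ⊕ B.X
  δ := fun r =>
    if leftC r = natSet 0 then (A.δ (rightC r)).map Sum.inl
    else if leftC r = natSet 1 then (B.δ (rightC r)).map Sum.inr
    else Part.none
  surj := by
    rintro (x | y)
    · obtain ⟨p, hp⟩ := A.surj x
      refine ⟨inC 0 p, ?_⟩
      have e1 : leftC (inC 0 p) = natSet 0 := leftC_pairC _ _
      have e2 : rightC (inC 0 p) = p := rightC_pairC _ _
      simp only [e1, e2, if_pos rfl]
      exact Part.mem_map _ hp
    · obtain ⟨p, hp⟩ := B.surj y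
      refine ⟨inC 1 p, ?_⟩
      have e1 : leftC (inC 1 p) = natSet 1 := leftC_pairC _ _
      have e2 : rightC (inC 1 p) = p := rightC_pairC _ _
      have hne : natSet 1 ≠ natSet 0 := by
        intro h
        have := congrFun h 0
        simp [natSet] at this
      simp only [e1, e2, hne, if_neg, if_pos rfl, ite_false, ite_true]
      exact Part.mem_map _ hp

/-- The completion `Ŷ = Y ∪ {∞_Y}` (with `∞_Y` rendered as `none`), represented by
`δ_Ŷ(p) = δ_Y(e(p))` if `p` is a total monotone approximation with `e(p) ∈ dom(δ_Y)`, and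
`δ_Ŷ(p) = ∞_Y` otherwise. -/
def hat (A : RepSp) : RepSp where
  X := Option A.X
  δ := fun p => Part.some (((evalMA p).bind A.δ).toOption)
  surj := by
    intro y
    match y with
    | none =>
        refine ⟨badMA, ?_⟩
        rw [Part.mem_some_iff]
        have hd : ¬ ((evalMA badMA).bind A.δ).Dom := by
          rintro ⟨h1, -⟩
          exact badMA_not h1
        rw [eq_comm, Part.toOption_eq_none_iff]
        exact hd
    | some x =>
        obtain ⟨p, hp⟩ := A.surj x
        refine ⟨maEncode p, ?_⟩
        rw [Part.mem_some_iff, eq_comm, Part.toOption_eq_some_iff]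
        exact Part.mem_bind (f := evalMA (maEncode p)) ⟨maEncode_total p, eVal_maEncode p⟩ hp

end RepSp

/-! ### Partial multifunctions and the Weihrauch reducibilities -/

/-- A partial multifunction `f : ⊆ X ⇉ Y` between represented spaces: `f.f x` is the set of
solutions of the instance `x`, and the domain of `f` is the set of `x` with `f.f x ≠ ∅`. -/
structure MFn : Type 1 where
  A : RepSp
  B : RepSp
  f : A.X → Set B.X

namespace MFn

/-- The coproduct `f ⊔ g`. -/
def sqcup (f g : MFn) : MFn where
  A := f.A.sum g.A
  B := f.B.sum g.B
  f := Sum.elim (fun x => Sum.inl '' f.f x) (fun y => Sum.inr '' g.f y)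

/-- The meet `f ⊓ g`, with `(f ⊓ g)(⟨x,y⟩) = ({0} × f(x)) ∪ ({1} × g(y))` for
`x ∈ dom f`, `y ∈ dom g`. -/
def sqcap (f g : MFn) : MFn where
  A := f.A.prod g.A
  B := f.B.sum g.B
  f := fun xy =>
    if (f.f xy.1).Nonempty ∧ (g.f xy.2).Nonempty then
      (Sum.inl '' f.f xy.1) ∪ (Sum.inr '' g.f xy.2)
    else ∅

/-- The join `f ⊞ g : ⊆ X₀ ⊔ X₁ ⇉ Ŷ₀ × Ŷ₁`, with `(f ⊞ g)(⟨0,x⟩) = f(x) × Ŷ₁` and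
`(f ⊞ g)(⟨1,x⟩) = Ŷ₀ × g(x)`. -/
def boxplus (f g : MFn) : MFn where
  A := f.A.sum g.A
  B := (f.B.hat).prod (g.B.hat)
  f := Sum.elim
    (fun x => (Option.some '' f.f x) ×ˢ (Set.univ : Set (Option g.B.X)))
    (fun y => (Set.univ : Set (Option f.B.X)) ×ˢ (Option.some '' g.f y))

end MFn

/-- `F ⊢ f`: the partial function `F : ⊆ 2^ω → 2^ω` is a realizer of `f`, i.e.
`δ_Y F(p) ∈ f δ_X(p)` for every `p ∈ dom(f δ_X)`. -/
def Realizes (F : Cantor →. Cantor) (f : MFn) : Prop :=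
  ∀ p x, x ∈ f.A.δ p → (f.f x).Nonempty →
    ∃ q ∈ F p, ∃ y ∈ f.B.δ q, y ∈ f.f x

/-- Composition of partial functions on Cantor space: `pcomp F G = F ∘ G`. -/
def pcomp (F G : Cantor →. Cantor) : Cantor →. Cantor := fun p => (G p).bind F

/-- Strong Weihrauch reducibility: `f ≤_sW g` iff there are Turing functionals `Φ, Ψ` with
`Ψ G Φ ⊢ f` for every `G ⊢ g`. -/
def sWLe (f g : MFn) : Prop :=
  ∃ Φ Ψ : TuringFunctional, ∀ G : Cantor →. Cantor, Realizes G g →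
    Realizes (pcomp Ψ.eval (pcomp G Φ.eval)) f

/-- Strong Weihrauch equivalence. -/
def sWEq (f g : MFn) : Prop := sWLe f g ∧ sWLe g f

/-- Weihrauch reducibility: `f ≤_W g` iff there are Turing functionals `Φ, Ψ` with
`Ψ⟨id, G Φ⟩ ⊢ f` for every `G ⊢ g`. -/
def wLe (f g : MFn) : Prop :=
  ∃ Φ Ψ : TuringFunctional, ∀ G : Cantor →. Cantor, Realizes G g →
    Realizes (fun p => (pcomp G Φ.eval p).bind fun q => Ψ.eval (pairC p q)) f

/-- Weihrauch equivalence. -/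
def wEq (f g : MFn) : Prop := wLe f g ∧ wLe g f

/-- Cantor space as a represented space, with the identity representation. -/
def CantorSp : RepSp where
  X := Cantor
  δ := fun p => Part.some p
  surj := fun p => ⟨p, Part.mem_some_iff.mpr rfl⟩

/-- A partial multifunction on Cantor space, viewed as a multifunction on represented
spaces via the identity representation. -/
def ofCantor (F : Cantor → Set Cantor) : MFn := ⟨CantorSp, CantorSp, F⟩

/-! ### Further definitions used in the statements -/

/-- `c` is an index for the Turing functional `Ψ`. -/
def codesTF (c : Nat.Partrec.Code) (Ψ : TuringFunctional) : Prop :=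
  ∀ (σ : List Bool) (n : ℕ),
    c.eval (Nat.pair (Encodable.encode σ) n) = Part.some (Encodable.encode (Ψ.approx σ n))

/-- The multifunction `h` of Lemma 4.4: `h(⟨0,p⟩)` consists of all pairs `⟨a,q⟩` where `a`
is a total monotone approximation with `e(a) ∈ F(p)`, and `h(⟨1,p⟩)` of all pairs `⟨q,a⟩`
where `a` is a total monotone approximation with `e(a) ∈ G(p)`. -/
def hJoin (F G : Cantor → Set Cantor) : Cantor → Set Cantor := fun r =>
  {z | leftC r = natSet 0 ∧
    ∃ a q, z = pairC a q ∧ TotalMonotoneApprox a ∧ eVal a ∈ F (rightC r)} ∪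
  {z | leftC r = natSet 1 ∧
    ∃ q a, z = pairC q a ∧ TotalMonotoneApprox a ∧ eVal a ∈ G (rightC r)}

/-- A single-valued partial function on Cantor space, viewed as a partial multifunction on
represented spaces (via the identity representation). -/
def pfnToM (F : Cantor →. Cantor) : MFn := ofCantor fun p => {q | q ∈ F p}

/-- The single-point partial function `{p} → {q}`. -/
def singleFn (p q : Cantor) : MFn := ofCantor fun r => if r = p then {q} else ∅

/-- `A` is Medvedev reducible to `B`. -/
def MedvedevLe (A B : Set Cantor) : Prop :=
  ∃ Φ : TuringFunctional, ∀ p ∈ B, ∃ q ∈ Φ.eval p, q ∈ A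

/-- The all-zero sequence `0^ω`. -/
def zeroSeq : Cantor := fun _ => false

/-- `d_A : A → {0^ω}`. -/
def dFn (A : Set Cantor) : MFn := ofCantor fun p => if p ∈ A then {zeroSeq} else ∅

/-- `A ⊔ B ⊆ 2^ω`: all `⟨i,p⟩` with `i < 2` and `p ∈ A` if `i = 0`, `p ∈ B` if `i = 1`. -/
def setSum (A B : Set Cantor) : Set Cantor :=
  {r | ∃ p ∈ A, r = inC 0 p} ∪ {r | ∃ p ∈ B, r = inC 1 p}

/-- `A × B ⊆ 2^ω`: all pairs `⟨p,q⟩` with `p ∈ A` and `q ∈ B`. -/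
def setProd (A B : Set Cantor) : Set Cantor := {r | ∃ p ∈ A, ∃ q ∈ B, r = pairC p q}

/-- `p` is a name of an instance of `f`. -/
def domName (f : MFn) (p : Cantor) : Prop := ∃ x ∈ f.A.δ p, (f.f x).Nonempty

/-- `q` is a name of a solution to the instance of `f` named by `p`. -/
def solName (f : MFn) (p q : Cantor) : Prop :=
  ∃ x ∈ f.A.δ p, ∃ y ∈ f.B.δ q, y ∈ f.f x

/-- Strong computable reducibility `f ≤_sc g`: every name `p` of an instance of `f`
computes a name `p'` of an instance of `g` such that every name of a solution to the
latter computes a name of a solution to the former. -/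
def scLe (f g : MFn) : Prop :=
  ∀ p, domName f p → ∃ p', TuringLe p' p ∧ domName g p' ∧
    ∀ q, solName g p' q → ∃ z, TuringLe z q ∧ solName f p z

/-- Strong computable equivalence. -/
def scEq (f g : MFn) : Prop := scLe f g ∧ scLe g f


/-!
Both `f ⊞ g` and `f ⊔ g` have the same names of instances, so only solutions need translating.
A solution `q` of `f ⊔ g` at a left instance becomes the pair of two copies of the canonical
monotone approximation of `q`; conversely the relevant half `a` of a solution of `f ⊞ g` is a
total monotone approximation, and `e(a)` is computed from `a` by searching it for the first
triple `⟨n,s,i⟩` with a given `n`. The lattice laws and distributivity only relabel names, which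
Turing functionals do; transitivity of `≤_T` runs the outer functional on the longest converged
prefix of the inner one's output.
-/

lemma getElem?_eq_some_of_prefix {l₁ l₂ : List Bool} (h : l₁ <+: l₂) {i : ℕ} {b : Bool}
    (hb : l₁[i]? = some b) : l₂[i]? = some b := by
  obtain ⟨hi, rfl⟩ := List.getElem?_eq_some_iff.mp hb
  exact List.prefix_iff_getElem?.mp h i hi

@[simp] lemma initSeg_length (p : Cantor) (s : ℕ) : (initSeg p s).length = s := by
  simp [initSeg]

lemma getElem?_initSeg (p : Cantor) {s k : ℕ} (h : k < s) : (initSeg p s)[k]? = some (p k) := by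
  simp [initSeg, h]

lemma getD_initSeg (p : Cantor) {s k : ℕ} (h : k < s) : (initSeg p s).getD k false = p k := by
  rw [List.getD_eq_getElem?_getD, getElem?_initSeg p h, Option.getD_some]

lemma initSeg_prefix_initSeg (p : Cantor) {s t : ℕ} (h : s ≤ t) : initSeg p s <+: initSeg p t :=
  List.prefix_iff_getElem?.mpr fun k hk => by
    simp only [initSeg_length] at hk
    rw [getElem?_initSeg p (hk.trans_le h)]
    simp [initSeg]

namespace TuringFunctional

variable (Φ : TuringFunctional)

lemma approx_initSeg_mono {p : Cantor} {s t n : ℕ} {b : Bool} (h : s ≤ t)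
    (hb : Φ.approx (initSeg p s) n = some b) : Φ.approx (initSeg p t) n = some b :=
  Φ.mono _ _ _ _ (initSeg_prefix_initSeg p h) hb

lemma approx_initSeg_inj {p : Cantor} {s t n : ℕ} {b c : Bool}
    (hb : Φ.approx (initSeg p s) n = some b) (hc : Φ.approx (initSeg p t) n = some c) :
    b = c := by
  have hb' := Φ.approx_initSeg_mono (le_max_left s t) hb
  rw [Φ.approx_initSeg_mono (le_max_right s t) hc, Option.some_inj] at hb'
  exact hb'.symm

theorem eval_eq_some_iff {p z : Cantor} :
    Φ.eval p = Part.some z ↔ ∀ n, ∃ s, Φ.approx (initSeg p s) n = some (z n) := by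
  rw [Part.eq_some_iff]
  constructor
  · rintro ⟨hdom, rfl⟩ n
    exact ⟨_, (hdom n).choose_spec.choose_spec⟩
  · intro h
    have hdom : (Φ.eval p).Dom := fun n => ⟨_, _, (h n).choose_spec⟩
    exact ⟨hdom, funext fun n =>
      Φ.approx_initSeg_inj (hdom n).choose_spec.choose_spec (h n).choose_spec⟩

end TuringFunctional

lemma turingLe_iff {q p : Cantor} :
    TuringLe q p ↔
      ∃ Φ : TuringFunctional, ∀ n, ∃ s, Φ.approx (initSeg p s) n = some (q n) :=
  exists_congr fun Φ => Φ.eval_eq_some_iff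

def queryTF (u : ℕ → ℕ) (g : ℕ → Bool → Bool) (hu : Computable u)
    (hg : Computable₂ g) : TuringFunctional where
  approx σ n := σ[u n]?.map (g n)
  computable := Computable.option_map
    (Computable.list_getElem?.comp Computable.fst (hu.comp Computable.snd))
    (hg.comp (Computable.snd.comp Computable.fst) Computable.snd).to₂
  mono _ _ _ _ h hb := by
    obtain ⟨a, ha, rfl⟩ := Option.map_eq_some_iff.mp hb
    rw [getElem?_eq_some_of_prefix h ha, Option.map_some]

lemma turingLe_of_query {u : ℕ → ℕ} {g : ℕ → Bool → Bool} (hu : Computable u)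
    (hg : Computable₂ g) (p : Cantor) : TuringLe (fun n => g n (p (u n))) p :=
  turingLe_iff.mpr ⟨queryTF u g hu hg, fun n => ⟨u n + 1, by
    simp only [queryTF, getElem?_initSeg p (Nat.lt_succ_self _), Option.map_some]⟩⟩

lemma turingLe_comp {u : ℕ → ℕ} (hu : Computable u) (p : Cantor) : TuringLe (p ∘ u) p :=
  turingLe_of_query hu (Computable.snd (α := ℕ) (β := Bool)).to₂ p

lemma turingLe_refl (p : Cantor) : TuringLe p p :=
  turingLe_comp Computable.id p

lemma turingLe_leftC (p : Cantor) : TuringLe (leftC p) p :=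
  turingLe_comp Primrec.nat_double.to_comp p

lemma turingLe_rightC (p : Cantor) : TuringLe (rightC p) p :=
  turingLe_comp Primrec.nat_double_succ.to_comp p

lemma turingLe_natSet (i : ℕ) (p : Cantor) : TuringLe (natSet i) p :=
  turingLe_of_query (u := id) (g := fun n _ => decide (n = i)) Computable.id
    (Primrec.eq.decide.comp Primrec.fst (Primrec.const i)).to_comp p

lemma maEncode_apply (q : Cantor) (k : ℕ) :
    maEncode q k = decide (k.unpair.1 = k.unpair.2.unpair.1 ∧
      k.unpair.2.unpair.2 = (q k.unpair.1).toNat) := by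
  refine decide_eq_decide.mpr ⟨?_, fun ⟨h₁, h₂⟩ => ⟨k.unpair.1, ?_⟩⟩
  · rintro ⟨n, rfl⟩
    simp [tpl]
  · rw [tpl, ← h₂]
    nth_rw 2 [h₁]
    rw [Nat.pair_unpair, Nat.pair_unpair]

lemma turingLe_maEncode (q : Cantor) : TuringLe (maEncode q) q := by
  have hu : Computable fun k : ℕ => k.unpair.1 := Computable.fst.comp Computable.unpair
  have hg : Computable₂ fun (k : ℕ) (b : Bool) =>
      decide (k.unpair.1 = k.unpair.2.unpair.1 ∧ k.unpair.2.unpair.2 = b.toNat) := by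
    have h₁ : Primrec fun x : ℕ × Bool => x.1.unpair.1 :=
      Primrec.fst.comp (Primrec.unpair.comp Primrec.fst)
    have h₂ : Primrec fun x : ℕ × Bool => x.1.unpair.2 :=
      Primrec.snd.comp (Primrec.unpair.comp Primrec.fst)
    exact ((Primrec.eq.comp h₁ (Primrec.fst.comp (Primrec.unpair.comp h₂))).and
      (Primrec.eq.comp (Primrec.snd.comp (Primrec.unpair.comp h₂))
        ((Primrec.dom_bool Bool.toNat).comp Primrec.snd))).decide.to_comp
  convert turingLe_of_query hu hg q using 1
  exact funext (maEncode_apply q)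

def pairTF (Φ₀ Φ₁ : TuringFunctional) : TuringFunctional where
  approx σ m := if m % 2 = 0 then Φ₀.approx σ (m / 2) else Φ₁.approx σ (m / 2)
  computable := by
    have hdiv : Computable fun x : List Bool × ℕ => x.2 / 2 :=
      (Primrec.nat_div.comp Primrec.snd (Primrec.const 2)).to_comp
    exact (Computable.cond
      (Primrec.eq.decide.comp (Primrec.nat_mod.comp Primrec.snd (Primrec.const 2))
        (Primrec.const 0)).to_comp
      (Φ₀.computable.comp Computable.fst hdiv)
      (Φ₁.computable.comp Computable.fst hdiv)).of_eq fun _ => Bool.cond_decide _ _ _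
  mono σ τ m b h hb := by
    split_ifs at hb ⊢
    · exact Φ₀.mono _ _ _ _ h hb
    · exact Φ₁.mono _ _ _ _ h hb

lemma TuringLe.pairC {a b p : Cantor} (ha : TuringLe a p) (hb : TuringLe b p) :
    TuringLe (pairC a b) p := by
  obtain ⟨Φ₀, hΦ₀⟩ := turingLe_iff.mp ha
  obtain ⟨Φ₁, hΦ₁⟩ := turingLe_iff.mp hb
  refine turingLe_iff.mpr ⟨pairTF Φ₀ Φ₁, fun m => ?_⟩
  by_cases hm : m % 2 = 0
  · simpa [pairTF, StrongWeihrauch.pairC, hm] using hΦ₀ (m / 2)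
  · simpa [pairTF, StrongWeihrauch.pairC, hm] using hΦ₁ (m / 2)

lemma TuringLe.inC (i : ℕ) {z p : Cantor} (h : TuringLe z p) : TuringLe (inC i z) p :=
  (turingLe_natSet i p).pairC h

namespace TuringFunctional

variable (Ψ : TuringFunctional)

lemma eventually_approx_initSeg {p r : Cantor} (h : Ψ.eval p = Part.some r) (n : ℕ) :
    ∀ᶠ t in Filter.atTop, Ψ.approx (initSeg p t) n = some (r n) := by
  obtain ⟨s, hs⟩ := Ψ.eval_eq_some_iff.mp h n
  exact Filter.eventually_atTop.mpr ⟨s, fun t ht => Ψ.approx_initSeg_mono ht hs⟩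

/-- The longest initial segment of the output of `Ψ` on the oracle prefix `σ` all of whose
bits have converged, among the first `k` bits. -/
def convergedPrefix (σ : List Bool) (k : ℕ) : List Bool :=
  Nat.rec [] (fun j l => if l.length = j then (Ψ.approx σ j).elim l (l ++ [·]) else l) k

variable {Ψ} {σ : List Bool}

lemma convergedPrefix_succ (k : ℕ) : Ψ.convergedPrefix σ (k + 1) =
    if (Ψ.convergedPrefix σ k).length = k then
      (Ψ.approx σ k).elim (Ψ.convergedPrefix σ k) (Ψ.convergedPrefix σ k ++ [·])
    else Ψ.convergedPrefix σ k := rfl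

lemma length_convergedPrefix_le (k : ℕ) : (Ψ.convergedPrefix σ k).length ≤ k := by
  induction k with
  | zero => exact le_rfl
  | succ k ih =>
    rw [convergedPrefix_succ]
    split_ifs with hk
    · cases Ψ.approx σ k <;> simp [hk]
    · exact ih.trans k.le_succ

lemma approx_of_getElem?_convergedPrefix {k j : ℕ} {b : Bool}
    (h : (Ψ.convergedPrefix σ k)[j]? = some b) : Ψ.approx σ j = some b := by
  induction k with
  | zero => simp [convergedPrefix] at h
  | succ k ih =>
    rw [convergedPrefix_succ] at h
    split_ifs at h with hk
    · cases hc : Ψ.approx σ k with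
      | none => exact ih (by simpa [hc] using h)
      | some c =>
        rw [hc, Option.elim_some, List.getElem?_append, List.getElem?_singleton] at h
        split_ifs at h with hj hj'
        · exact ih h
        · rwa [show j = k by omega, hc]
    · exact ih h

lemma approx_eq_getElem_convergedPrefix {k j : ℕ} (hj : j < (Ψ.convergedPrefix σ k).length) :
    Ψ.approx σ j = some (Ψ.convergedPrefix σ k)[j] :=
  approx_of_getElem?_convergedPrefix (List.getElem?_eq_getElem hj)

lemma le_length_convergedPrefix {m k : ℕ} (hmk : m ≤ k)
    (hconv : ∀ j < m, (Ψ.approx σ j).isSome) : m ≤ (Ψ.convergedPrefix σ k).length := by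
  induction k generalizing m with
  | zero => exact hmk
  | succ k ih =>
    rcases Nat.lt_succ_iff_lt_or_eq.mp (Nat.lt_succ_iff.mpr hmk) with hmk | rfl
    · refine (ih (Nat.lt_succ_iff.mp hmk) hconv).trans ?_
      rw [convergedPrefix_succ]
      split_ifs
      · cases Ψ.approx σ k <;> simp
      · exact le_rfl
    · have hk : (Ψ.convergedPrefix σ k).length = k :=
        le_antisymm (length_convergedPrefix_le k)
          (ih k.le_refl fun j hj => hconv j (hj.trans k.lt_succ_self))
      obtain ⟨b, hb⟩ := Option.isSome_iff_exists.mp (hconv k k.lt_succ_self)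
      simp [convergedPrefix_succ, hk, hb]

lemma convergedPrefix_prefix {τ : List Bool} (h : σ <+: τ) {k k' : ℕ} (hk : k ≤ k') :
    Ψ.convergedPrefix σ k <+: Ψ.convergedPrefix τ k' := by
  have happrox : ∀ j (hj : j < (Ψ.convergedPrefix σ k).length),
      Ψ.approx τ j = some (Ψ.convergedPrefix σ k)[j] := fun j hj =>
    Ψ.mono _ _ _ _ h (approx_eq_getElem_convergedPrefix hj)
  have hlen : (Ψ.convergedPrefix σ k).length ≤ (Ψ.convergedPrefix τ k').length :=
    le_length_convergedPrefix ((length_convergedPrefix_le k).trans hk)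
      fun j hj => by simp [happrox j hj]
  refine List.prefix_iff_getElem?.mpr fun j hj => ?_
  rw [List.getElem?_eq_getElem (hj.trans_le hlen), Option.some_inj]
  exact Option.some_inj.mp
    ((approx_eq_getElem_convergedPrefix (hj.trans_le hlen)).symm.trans (happrox j hj))

lemma convergedPrefix_initSeg {p r : Cantor} (h : Ψ.eval p = Part.some r) (t k : ℕ) :
    Ψ.convergedPrefix (initSeg p t) k
      = initSeg r (Ψ.convergedPrefix (initSeg p t) k).length := by
  refine List.ext_getElem (by simp) fun j hj _ => ?_
  obtain ⟨s, hs⟩ := Ψ.eval_eq_some_iff.mp h j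
  rw [Ψ.approx_initSeg_inj (approx_eq_getElem_convergedPrefix hj) hs]
  simp [initSeg]

lemma eventually_initSeg_prefix_convergedPrefix {p r : Cantor} (h : Ψ.eval p = Part.some r)
    (m : ℕ) : ∀ᶠ t in Filter.atTop, initSeg r m <+: Ψ.convergedPrefix (initSeg p t) t := by
  have hall : ∀ᶠ t in Filter.atTop, ∀ j ∈ Finset.range m,
      Ψ.approx (initSeg p t) j = some (r j) :=
    (Filter.eventually_all_finset _).mpr fun j _ => Ψ.eventually_approx_initSeg h j
  filter_upwards [hall, Filter.eventually_ge_atTop m] with t hconv hmt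
  rw [convergedPrefix_initSeg h]
  refine initSeg_prefix_initSeg r (le_length_convergedPrefix hmt fun j hj => ?_)
  simp [hconv j (Finset.mem_range.mpr hj)]

end TuringFunctional

def compTF (Φ Ψ : TuringFunctional) : TuringFunctional where
  approx σ n := Φ.approx (Ψ.convergedPrefix σ σ.length) n
  computable := by
    have hstep : Computable₂ fun (σ : List Bool) (jl : ℕ × List Bool) =>
        if jl.2.length = jl.1 then (Ψ.approx σ jl.1).elim jl.2 (jl.2 ++ [·]) else jl.2 := by
      have hl : Computable fun x : List Bool × ℕ × List Bool => x.2.2 :=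
        Computable.snd.comp Computable.snd
      have hj : Computable fun x : List Bool × ℕ × List Bool => x.2.1 :=
        Computable.fst.comp Computable.snd
      refine (Computable.cond
        (Primrec.eq.decide.comp (Primrec.list_length.comp (Primrec.snd.comp Primrec.snd))
          (Primrec.fst.comp Primrec.snd)).to_comp
        (Computable.option_casesOn (Ψ.computable.comp Computable.fst hj) hl
          (Computable.list_concat.comp (hl.comp Computable.fst) Computable.snd).to₂)
        hl).of_eq fun x => ?_
      rw [Bool.cond_decide]
      dsimp only
      cases Ψ.approx x.1 x.2.1 <;> rfl
    have hprefix : Computable fun σ => Ψ.convergedPrefix σ σ.length :=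
      Computable.nat_rec Computable.list_length (Computable.const []) hstep
    exact Φ.computable.comp (hprefix.comp Computable.fst) Computable.snd
  mono σ τ n b h hb :=
    Φ.mono _ _ _ _ (TuringFunctional.convergedPrefix_prefix h h.length_le) hb

lemma TuringLe.trans {z r p : Cantor} (hzr : TuringLe z r) (hrp : TuringLe r p) :
    TuringLe z p := by
  obtain ⟨Φ, hΦ⟩ := hzr
  obtain ⟨Ψ, hΨ⟩ := hrp
  refine ⟨compTF Φ Ψ, (compTF Φ Ψ).eval_eq_some_iff.mpr fun n => ?_⟩
  obtain ⟨s, hs⟩ := Φ.eval_eq_some_iff.mp hΦ n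
  obtain ⟨t, ht⟩ := (Ψ.eventually_initSeg_prefix_convergedPrefix hΨ s).exists
  exact ⟨t, Φ.mono _ _ _ _ (by simpa [compTF] using ht) hs⟩

lemma eVal_apply_of_mem {a : Cantor} (ha : MonotoneApprox a) {n s i : ℕ}
    (h : a (tpl n s i) = true) : eVal a n = decide (i = 1) := by
  refine decide_eq_decide.mpr ⟨fun ⟨t, ht⟩ => (ha.2.1 n s t i 1 h ht).2, ?_⟩
  rintro rfl
  exact ⟨s, h⟩

/-- Reads `e(a)(n) = i` off the first element `⟨n,s,i⟩` of `a`. -/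
def evalTF : TuringFunctional where
  approx σ n :=
    ((List.range σ.length).filter fun k => σ.getD k false && decide (k.unpair.1 = n)).head?.map
      fun k => decide (k.unpair.2.unpair.2 = 1)
  computable := by
    have hp : Primrec₂ fun (x : List Bool × ℕ) (k : ℕ) =>
        x.1.getD k false && decide (k.unpair.1 = x.2) :=
      Primrec.and.comp ((Primrec.list_getD false).comp (Primrec.fst.comp Primrec.fst) Primrec.snd)
        (Primrec.eq.decide.comp (Primrec.fst.comp (Primrec.unpair.comp Primrec.snd))
          (Primrec.snd.comp Primrec.fst))
    have hguard : Primrec₂ fun (x : List Bool × ℕ) (k : ℕ) =>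
        Option.guard (fun k => x.1.getD k false && decide (k.unpair.1 = x.2)) k :=
      (Primrec.cond hp (Primrec.option_some.comp Primrec.snd) (Primrec.const none)).of_eq
        fun _ => (Bool.cond_eq_ite _ _ _).trans rfl
    have hfilter := Primrec.listFilterMap
      (Primrec.list_range.comp (Primrec.list_length.comp Primrec.fst)) hguard
    refine (Primrec.option_map (Primrec.list_head?.comp hfilter) (Primrec.eq.decide.comp
      (Primrec.snd.comp (Primrec.unpair.comp (Primrec.snd.comp (Primrec.unpair.comp Primrec.snd))))
      (Primrec.const 1)).to₂).to_comp.of_eq fun x => ?_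
    rw [List.filterMap_eq_filter]
  mono σ τ n b h hb := by
    obtain ⟨k, hk, rfl⟩ := Option.map_eq_some_iff.mp hb
    have hgetD : ∀ j ∈ List.range σ.length, τ.getD j false = σ.getD j false := fun j hj => by
      have hσ := List.getElem?_eq_getElem (List.mem_range.mp hj)
      rw [List.getD_eq_getElem?_getD, List.getD_eq_getElem?_getD, hσ,
        getElem?_eq_some_of_prefix h hσ]
    rw [← Nat.add_sub_cancel' h.length_le, List.range_add, List.filter_append,
      List.filter_congr fun j hj => by rw [hgetD j hj], List.head?_append, hk]
    rfl

lemma turingLe_eVal {a : Cantor} (ha : TotalMonotoneApprox a) : TuringLe (eVal a) a := by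
  refine turingLe_iff.mpr ⟨evalTF, fun n => ?_⟩
  obtain ⟨s, i, -, hsi⟩ := ha.2 n
  refine ⟨tpl n s i + 1, ?_⟩
  set L := (List.range (tpl n s i + 1)).filter fun k =>
    (initSeg a (tpl n s i + 1)).getD k false && decide (k.unpair.1 = n)
  have hmem : tpl n s i ∈ L := List.mem_filter.mpr ⟨List.mem_range.mpr (Nat.lt_succ_self _), by
    rw [getD_initSeg a (Nat.lt_succ_self _), hsi]
    simp [tpl]⟩
  obtain ⟨k, hk⟩ := Option.isSome_iff_exists.mp
    (List.isSome_head?.mpr (List.ne_nil_of_mem hmem))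
  obtain ⟨hkt, hak⟩ := List.mem_filter.mp (List.mem_of_mem_head? hk)
  rw [List.mem_range] at hkt
  rw [getD_initSeg a hkt, Bool.and_eq_true, decide_eq_true_eq] at hak
  have hk_eq : tpl n k.unpair.2.unpair.1 k.unpair.2.unpair.2 = k := by
    rw [tpl, ← hak.2, Nat.pair_unpair, Nat.pair_unpair]
  rw [eVal_apply_of_mem ha.1 (hk_eq ▸ hak.1)]
  simp only [evalTF, initSeg_length]
  rw [hk, Option.map_some]

lemma natSet_injective : Function.Injective natSet := fun i j h => by
  simpa [natSet] using congrFun h i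

@[simp] lemma leftC_inC (i : ℕ) (p : Cantor) : leftC (inC i p) = natSet i := leftC_pairC _ _

@[simp] lemma rightC_inC (i : ℕ) (p : Cantor) : rightC (inC i p) = p := rightC_pairC _ _

@[simp] lemma mem_CantorSp_δ {p x : Cantor} : x ∈ CantorSp.δ p ↔ x = p := Part.mem_some_iff

namespace RepSp

variable {A B : RepSp} {r : Cantor}

@[simp] lemma inl_mem_sum_δ {a : A.X} :
    (Sum.inl a : (A.sum B).X) ∈ (A.sum B).δ r ↔
      leftC r = natSet 0 ∧ a ∈ A.δ (rightC r) := by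
  change (Sum.inl a : A.X ⊕ B.X) ∈ (if leftC r = natSet 0 then (A.δ (rightC r)).map Sum.inl
    else if leftC r = natSet 1 then (B.δ (rightC r)).map Sum.inr else Part.none) ↔ _
  by_cases h0 : leftC r = natSet 0 <;> by_cases h1 : leftC r = natSet 1 <;>
    simp [h0, h1, Part.mem_map_iff, natSet_injective.ne]

@[simp] lemma inr_mem_sum_δ {b : B.X} :
    (Sum.inr b : (A.sum B).X) ∈ (A.sum B).δ r ↔
      leftC r = natSet 1 ∧ b ∈ B.δ (rightC r) := by
  change (Sum.inr b : A.X ⊕ B.X) ∈ (if leftC r = natSet 0 then (A.δ (rightC r)).map Sum.inl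
    else if leftC r = natSet 1 then (B.δ (rightC r)).map Sum.inr else Part.none) ↔ _
  by_cases h0 : leftC r = natSet 0 <;> by_cases h1 : leftC r = natSet 1 <;>
    simp [h0, h1, Part.mem_map_iff, natSet_injective.ne]

lemma inl_mem_sum_δ_inC {a : A.X} {p : Cantor} (h : a ∈ A.δ p) :
    (Sum.inl a : (A.sum B).X) ∈ (A.sum B).δ (inC 0 p) := by
  simpa using h

lemma inr_mem_sum_δ_inC {b : B.X} {p : Cantor} (h : b ∈ B.δ p) :
    (Sum.inr b : (A.sum B).X) ∈ (A.sum B).δ (inC 1 p) := by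
  simpa using h

@[simp] lemma mk_mem_prod_δ {a : A.X} {b : B.X} :
    ((a, b) : (A.prod B).X) ∈ (A.prod B).δ r ↔
      a ∈ A.δ (leftC r) ∧ b ∈ B.δ (rightC r) := by
  change ((a, b) : A.X × B.X) ∈
    (A.δ (leftC r)).bind (fun x => (B.δ (rightC r)).map (x, ·)) ↔ _
  simp [Part.mem_bind_iff, Part.mem_map_iff]

lemma mk_mem_prod_δ_pairC {a : A.X} {b : B.X} {p q : Cantor} (ha : a ∈ A.δ p)
    (hb : b ∈ B.δ q) :
    ((a, b) : (A.prod B).X) ∈ (A.prod B).δ (pairC p q) := by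
  simpa [leftC_pairC, rightC_pairC] using ⟨ha, hb⟩

lemma some_mem_hat_δ {a : A.X} :
    some a ∈ A.hat.δ r ↔ TotalMonotoneApprox r ∧ a ∈ A.δ (eVal r) := by
  change some a ∈ Part.some ((evalMA r).bind A.δ).toOption ↔ _
  rw [Part.mem_some_iff, eq_comm, Part.toOption_eq_some_iff]
  refine Part.mem_bind_iff.trans ⟨?_, ?_⟩
  · rintro ⟨_, ⟨h, rfl⟩, ha⟩
    exact ⟨h, ha⟩
  · rintro ⟨h, ha⟩
    exact ⟨_, ⟨h, rfl⟩, ha⟩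

end RepSp

lemma some_mem_hat_δ_maEncode (q : Cantor) : some q ∈ CantorSp.hat.δ (maEncode q) :=
  RepSp.some_mem_hat_δ.mpr ⟨maEncode_total q, mem_CantorSp_δ.mpr (eVal_maEncode q).symm⟩

namespace MFn

def SolutionsReduce (f g : MFn) (x : f.A.X) (y : g.A.X) : Prop :=
  ∀ q, ∀ v ∈ g.B.δ q, v ∈ g.f y → ∃ z, TuringLe z q ∧ ∃ u ∈ f.B.δ z, u ∈ f.f x

lemma scLe_iff {f g : MFn} : scLe f g ↔ ∀ p, ∀ x ∈ f.A.δ p, (f.f x).Nonempty →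
    ∃ p', TuringLe p' p ∧
      ∃ y ∈ g.A.δ p', (g.f y).Nonempty ∧ SolutionsReduce f g x y := by
  constructor
  · intro h p x hx hne
    obtain ⟨p', hp', ⟨y, hy, hyne⟩, hsol⟩ := h p ⟨x, hx, hne⟩
    refine ⟨p', hp', y, hy, hyne, fun q v hv hvy => ?_⟩
    obtain ⟨z, hz, x', hx', u, hu, hux⟩ := hsol q ⟨y, hy, v, hv, hvy⟩
    exact ⟨z, hz, u, hu, Part.mem_unique hx' hx ▸ hux⟩
  · rintro h p ⟨x, hx, hne⟩
    obtain ⟨p', hp', y, hy, hyne, hsol⟩ := h p x hx hne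
    refine ⟨p', hp', ⟨y, hy, hyne⟩, fun q ⟨y', hy', v, hv, hvy⟩ => ?_⟩
    obtain ⟨z, hz, hzsol⟩ := hsol q v hv (Part.mem_unique hy' hy ▸ hvy)
    exact ⟨z, hz, x, hx, hzsol⟩

lemma scLe_trans {f g h : MFn} (hfg : scLe f g) (hgh : scLe g h) : scLe f h := by
  intro p hp
  obtain ⟨p₁, hp₁, hdom₁, hsol₁⟩ := hfg p hp
  obtain ⟨p₂, hp₂, hdom₂, hsol₂⟩ := hgh p₁ hdom₁
  refine ⟨p₂, hp₂.trans hp₁, hdom₂, fun q hq => ?_⟩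
  obtain ⟨z₁, hz₁, hq₁⟩ := hsol₂ q hq
  obtain ⟨z, hz, hq'⟩ := hsol₁ z₁ hq₁
  exact ⟨z, hz.trans hz₁, hq'⟩

instance : Preorder MFn where
  le := scLe
  le_refl _ := fun p hp => ⟨p, turingLe_refl p, hp, fun q hq => ⟨q, turingLe_refl q, hq⟩⟩
  le_trans _ _ _ := scLe_trans

lemma le_of_forall_solutionsReduce {f g : MFn} (e : f.A.X → g.A.X)
    (he : ∀ p, ∀ x ∈ f.A.δ p, e x ∈ g.A.δ p)
    (hne : ∀ x, (f.f x).Nonempty → (g.f (e x)).Nonempty)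
    (hsol : ∀ x, SolutionsReduce f g x (e x)) : f ≤ g :=
  scLe_iff.mpr fun p x hx hx' => ⟨p, turingLe_refl p, e x, he p x hx, hne x hx', hsol x⟩

variable {f g k : MFn}

lemma sqcap_f_of_nonempty {x : f.A.X} {y : g.A.X} (hx : (f.f x).Nonempty) (hy : (g.f y).Nonempty) :
    (f.sqcap g).f (x, y) = Sum.inl '' f.f x ∪ Sum.inr '' g.f y :=
  if_pos ⟨hx, hy⟩

lemma sqcap_f_nonempty_iff {x : f.A.X} {y : g.A.X} :
    ((f.sqcap g).f (x, y)).Nonempty ↔ (f.f x).Nonempty ∧ (g.f y).Nonempty := by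
  refine ⟨fun h => ?_, fun ⟨hx, hy⟩ => ?_⟩
  · by_contra hxy
    have hempty : (f.sqcap g).f (x, y) = ∅ := if_neg hxy
    exact Set.not_nonempty_empty (hempty ▸ h)
  · rw [sqcap_f_of_nonempty hx hy]
    exact (hx.image _).mono Set.subset_union_left

namespace SolutionsReduce

lemma refl (x : f.A.X) : SolutionsReduce f f x x :=
  fun q v hv hvx => ⟨q, turingLe_refl q, v, hv, hvx⟩

lemma sqcup_inl {w : k.A.X} {x : f.A.X} (h : SolutionsReduce k f w x) :
    SolutionsReduce k (f.sqcup g) w (.inl x) := by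
  rintro q _ hv ⟨u, hu, rfl⟩
  obtain ⟨z, hz, hzsol⟩ := h (rightC q) u (RepSp.inl_mem_sum_δ.mp hv).2 hu
  exact ⟨z, hz.trans (turingLe_rightC q), hzsol⟩

lemma sqcup_inr {w : k.A.X} {y : g.A.X} (h : SolutionsReduce k g w y) :
    SolutionsReduce k (f.sqcup g) w (.inr y) := by
  rintro q _ hv ⟨u, hu, rfl⟩
  obtain ⟨z, hz, hzsol⟩ := h (rightC q) u (RepSp.inr_mem_sum_δ.mp hv).2 hu
  exact ⟨z, hz.trans (turingLe_rightC q), hzsol⟩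

lemma inl_sqcup {x : f.A.X} {w : k.A.X} (h : SolutionsReduce f k x w) :
    SolutionsReduce (f.sqcup g) k (.inl x) w := fun q v hv hvw => by
  obtain ⟨z, hz, u, hu, hux⟩ := h q v hv hvw
  exact ⟨inC 0 z, hz.inC 0, .inl u, RepSp.inl_mem_sum_δ_inC hu, u, hux, rfl⟩

lemma inr_sqcup {y : g.A.X} {w : k.A.X} (h : SolutionsReduce g k y w) :
    SolutionsReduce (f.sqcup g) k (.inr y) w := fun q v hv hvw => by
  obtain ⟨z, hz, u, hu, huy⟩ := h q v hv hvw
  exact ⟨inC 1 z, hz.inC 1, .inr u, RepSp.inr_mem_sum_δ_inC hu, u, huy, rfl⟩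

lemma sqcap_right {w : k.A.X} {x : f.A.X} {y : g.A.X} (hf : SolutionsReduce k f w x)
    (hg : SolutionsReduce k g w y) : SolutionsReduce k (f.sqcap g) w (x, y) := by
  rintro q v hv hvxy
  obtain ⟨hx, hy⟩ := sqcap_f_nonempty_iff.mp ⟨v, hvxy⟩
  rw [sqcap_f_of_nonempty hx hy] at hvxy
  rcases hvxy with ⟨u, hu, rfl⟩ | ⟨u, hu, rfl⟩
  · obtain ⟨z, hz, hzsol⟩ := hf (rightC q) u (RepSp.inl_mem_sum_δ.mp hv).2 hu
    exact ⟨z, hz.trans (turingLe_rightC q), hzsol⟩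
  · obtain ⟨z, hz, hzsol⟩ := hg (rightC q) u (RepSp.inr_mem_sum_δ.mp hv).2 hu
    exact ⟨z, hz.trans (turingLe_rightC q), hzsol⟩

lemma sqcap_left_fst {x : f.A.X} {y : g.A.X} {w : k.A.X} (h : SolutionsReduce f k x w)
    (hy : (g.f y).Nonempty) : SolutionsReduce (f.sqcap g) k (x, y) w := fun q v hv hvw => by
  obtain ⟨z, hz, u, hu, hux⟩ := h q v hv hvw
  exact ⟨inC 0 z, hz.inC 0, .inl u, RepSp.inl_mem_sum_δ_inC hu,
    by rw [sqcap_f_of_nonempty ⟨u, hux⟩ hy]; exact .inl ⟨u, hux, rfl⟩⟩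

lemma sqcap_left_snd {x : f.A.X} {y : g.A.X} {w : k.A.X} (h : SolutionsReduce g k y w)
    (hx : (f.f x).Nonempty) : SolutionsReduce (f.sqcap g) k (x, y) w := fun q v hv hvw => by
  obtain ⟨z, hz, u, hu, huy⟩ := h q v hv hvw
  exact ⟨inC 1 z, hz.inC 1, .inr u, RepSp.inr_mem_sum_δ_inC hu,
    by rw [sqcap_f_of_nonempty hx ⟨u, huy⟩]; exact .inr ⟨u, huy, rfl⟩⟩

end SolutionsReduce

lemma le_sqcup_left (f g : MFn) : f ≤ f.sqcup g :=
  scLe_iff.mpr fun p x hx hne => ⟨inC 0 p, (turingLe_refl p).inC 0, .inl x,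
    RepSp.inl_mem_sum_δ_inC hx, hne.image _, (SolutionsReduce.refl x).sqcup_inl⟩

lemma le_sqcup_right (f g : MFn) : g ≤ f.sqcup g :=
  scLe_iff.mpr fun p y hy hne => ⟨inC 1 p, (turingLe_refl p).inC 1, .inr y,
    RepSp.inr_mem_sum_δ_inC hy, hne.image _, (SolutionsReduce.refl y).sqcup_inr⟩

lemma sqcup_le (hf : f ≤ k) (hg : g ≤ k) : f.sqcup g ≤ k := by
  refine scLe_iff.mpr fun p x hx hne => ?_
  rcases x with x | y
  · obtain ⟨p', hp', w, hw, hwne, hsol⟩ := scLe_iff.mp hf (rightC p) x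
      (RepSp.inl_mem_sum_δ.mp hx).2 (Set.image_nonempty.mp hne)
    exact ⟨p', hp'.trans (turingLe_rightC p), w, hw, hwne, hsol.inl_sqcup⟩
  · obtain ⟨p', hp', w, hw, hwne, hsol⟩ := scLe_iff.mp hg (rightC p) y
      (RepSp.inr_mem_sum_δ.mp hx).2 (Set.image_nonempty.mp hne)
    exact ⟨p', hp'.trans (turingLe_rightC p), w, hw, hwne, hsol.inr_sqcup⟩

lemma sqcap_le_left (f g : MFn) : f.sqcap g ≤ f :=
  scLe_iff.mpr fun p ⟨x, _⟩ hxy hne =>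
    have hne' := sqcap_f_nonempty_iff.mp hne
    ⟨leftC p, turingLe_leftC p, x, (RepSp.mk_mem_prod_δ.mp hxy).1, hne'.1,
      (SolutionsReduce.refl x).sqcap_left_fst hne'.2⟩

lemma sqcap_le_right (f g : MFn) : f.sqcap g ≤ g :=
  scLe_iff.mpr fun p ⟨_, y⟩ hxy hne =>
    have hne' := sqcap_f_nonempty_iff.mp hne
    ⟨rightC p, turingLe_rightC p, y, (RepSp.mk_mem_prod_δ.mp hxy).2, hne'.2,
      (SolutionsReduce.refl y).sqcap_left_snd hne'.1⟩

lemma le_sqcap (hf : k ≤ f) (hg : k ≤ g) : k ≤ f.sqcap g := by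
  refine scLe_iff.mpr fun p w hw hne => ?_
  obtain ⟨p₁, hp₁, x, hx, hxne, hsol₁⟩ := scLe_iff.mp hf p w hw hne
  obtain ⟨p₂, hp₂, y, hy, hyne, hsol₂⟩ := scLe_iff.mp hg p w hw hne
  exact ⟨pairC p₁ p₂, hp₁.pairC hp₂, (x, y), RepSp.mk_mem_prod_δ_pairC hx hy,
    sqcap_f_nonempty_iff.mpr ⟨hxne, hyne⟩, hsol₁.sqcap_right hsol₂⟩

lemma sqcup_sqcap_le_sqcap_sqcup_sqcap (f g k : MFn) :
    (f.sqcup g).sqcap k ≤ (f.sqcap k).sqcup (g.sqcap k) := by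
  refine scLe_iff.mpr fun p ⟨x, w⟩ hxw hne => ?_
  obtain ⟨hx, hw⟩ := RepSp.mk_mem_prod_δ.mp hxw
  obtain ⟨hxne, hwne⟩ := sqcap_f_nonempty_iff.mp hne
  have hp : TuringLe (pairC (rightC (leftC p)) (rightC p)) p :=
    ((turingLe_rightC _).trans (turingLe_leftC p)).pairC (turingLe_rightC p)
  have hsolw := (SolutionsReduce.refl w).sqcap_left_snd hxne
  rcases x with x | y
  · have hxne' := Set.image_nonempty.mp hxne
    exact ⟨_, hp.inC 0, .inl (x, w), RepSp.inl_mem_sum_δ_inC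
      (RepSp.mk_mem_prod_δ_pairC (RepSp.inl_mem_sum_δ.mp hx).2 hw),
      (sqcap_f_nonempty_iff.mpr ⟨hxne', hwne⟩).image _,
      (((SolutionsReduce.refl x).inl_sqcup.sqcap_left_fst hwne).sqcap_right hsolw).sqcup_inl⟩
  · have hyne' := Set.image_nonempty.mp hxne
    exact ⟨_, hp.inC 1, .inr (y, w), RepSp.inr_mem_sum_δ_inC
      (RepSp.mk_mem_prod_δ_pairC (RepSp.inr_mem_sum_δ.mp hx).2 hw),
      (sqcap_f_nonempty_iff.mpr ⟨hyne', hwne⟩).image _,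
      (((SolutionsReduce.refl y).inr_sqcup.sqcap_left_fst hwne).sqcap_right hsolw).sqcup_inr⟩

lemma sqcap_sqcup_sqcap_le_sqcup_sqcap (f g k : MFn) :
    (f.sqcap k).sqcup (g.sqcap k) ≤ (f.sqcup g).sqcap k :=
  sqcup_le (le_sqcap ((sqcap_le_left f k).trans (le_sqcup_left f g)) (sqcap_le_right f k))
    (le_sqcap ((sqcap_le_left g k).trans (le_sqcup_right f g)) (sqcap_le_right g k))

variable (F G : Cantor → Set Cantor)

lemma ofCantor_boxplus_le_sqcup :
    (ofCantor F).boxplus (ofCantor G) ≤ (ofCantor F).sqcup (ofCantor G) := by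
  refine le_of_forall_solutionsReduce id (fun _ _ hx => hx) ?_ ?_
  · rintro (x | x) ⟨_, hv⟩
    · obtain ⟨u, hu, -⟩ := hv.1
      exact ⟨_, u, hu, rfl⟩
    · obtain ⟨u, hu, -⟩ := hv.2
      exact ⟨_, u, hu, rfl⟩
  · have hq : ∀ q, TuringLe (pairC (maEncode (rightC q)) (maEncode (rightC q))) q := fun q =>
      have h := (turingLe_maEncode _).trans (turingLe_rightC q)
      h.pairC h
    have hmem : ∀ u, ((some u, some u) : (CantorSp.hat.prod CantorSp.hat).X) ∈
        (CantorSp.hat.prod CantorSp.hat).δ (pairC (maEncode u) (maEncode u)) := fun u =>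
      RepSp.mk_mem_prod_δ_pairC (some_mem_hat_δ_maEncode u) (some_mem_hat_δ_maEncode u)
    rintro (x | x) q _ hv ⟨u, hu, rfl⟩
    · obtain rfl := mem_CantorSp_δ.mp (RepSp.inl_mem_sum_δ.mp hv).2
      exact ⟨_, hq q, _, hmem _, ⟨_, hu, rfl⟩, trivial⟩
    · obtain rfl := mem_CantorSp_δ.mp (RepSp.inr_mem_sum_δ.mp hv).2
      exact ⟨_, hq q, _, hmem _, trivial, ⟨_, hu, rfl⟩⟩

lemma ofCantor_sqcup_le_boxplus :
    (ofCantor F).sqcup (ofCantor G) ≤ (ofCantor F).boxplus (ofCantor G) := by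
  refine le_of_forall_solutionsReduce id (fun _ _ hx => hx) ?_ ?_
  · rintro (x | x) ⟨_, ⟨u, hu, rfl⟩⟩
    exacts [⟨(some u, none), ⟨u, hu, rfl⟩, trivial⟩,
      ⟨(none, some u), trivial, ⟨u, hu, rfl⟩⟩]
  · rintro (x | x) q ⟨c₀, c₁⟩ hv hvx
    · obtain ⟨u, hu, rfl⟩ := hvx.1
      obtain ⟨hq, hu'⟩ := RepSp.some_mem_hat_δ.mp (RepSp.mk_mem_prod_δ.mp hv).1
      obtain rfl := mem_CantorSp_δ.mp hu'
      exact ⟨inC 0 _, ((turingLe_eVal hq).trans (turingLe_leftC q)).inC 0, _,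
        RepSp.inl_mem_sum_δ_inC (mem_CantorSp_δ.mpr rfl), ⟨_, hu, rfl⟩⟩
    · obtain ⟨u, hu, rfl⟩ := hvx.2
      obtain ⟨hq, hu'⟩ := RepSp.some_mem_hat_δ.mp (RepSp.mk_mem_prod_δ.mp hv).2
      obtain rfl := mem_CantorSp_δ.mp hu'
      exact ⟨inC 1 _, ((turingLe_eVal hq).trans (turingLe_rightC q)).inC 1, _,
        RepSp.inr_mem_sum_δ_inC (mem_CantorSp_δ.mpr rfl), ⟨_, hu, rfl⟩⟩

end MFn

/-- Remark 4.7: `f ⊞ g ≡_sc f ⊔ g` for partial multifunctions on Cantor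
space, and the strong computable degrees form a distributive lattice with `⊔` as join and
`⊓` as meet. -/
theorem stmt18 :
    (∀ F G : Cantor → Set Cantor,
      scEq ((ofCantor F).boxplus (ofCantor G)) ((ofCantor F).sqcup (ofCantor G))) ∧
    ∃ (D : Type 1) (le : D → D → Prop) (φ : MFn → D),
      Function.Surjective φ ∧ IsPartialOrder D le ∧
      (∀ f g, φ f = φ g ↔ scEq f g) ∧
      (∀ f g, le (φ f) (φ g) ↔ scLe f g) ∧
      (∀ f g, le (φ f) (φ (f.sqcup g)) ∧ le (φ g) (φ (f.sqcup g)) ∧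
        ∀ h, le (φ f) (φ h) → le (φ g) (φ h) → le (φ (f.sqcup g)) (φ h)) ∧
      (∀ f g, le (φ (f.sqcap g)) (φ f) ∧ le (φ (f.sqcap g)) (φ g) ∧
        ∀ h, le (φ h) (φ f) → le (φ h) (φ g) → le (φ h) (φ (f.sqcap g))) ∧
      (∀ f g h : MFn, φ ((f.sqcup g).sqcap h) = φ ((f.sqcap h).sqcup (g.sqcap h))) := by
  refine ⟨fun F G => ⟨MFn.ofCantor_boxplus_le_sqcup F G, MFn.ofCantor_sqcup_le_boxplus F G⟩,
    Antisymmetrization MFn (· ≤ ·), (· ≤ ·), toAntisymmetrization (· ≤ ·),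
    fun d => ⟨_, toAntisymmetrization_ofAntisymmetrization _ d⟩, inferInstance,
    fun f g => Quotient.eq, fun f g => Iff.rfl,
    fun f g => ⟨MFn.le_sqcup_left f g, MFn.le_sqcup_right f g, fun _ => MFn.sqcup_le⟩,
    fun f g => ⟨MFn.sqcap_le_left f g, MFn.sqcap_le_right f g, fun _ => MFn.le_sqcap⟩,
    fun f g h => Quotient.sound ⟨MFn.sqcup_sqcap_le_sqcap_sqcup_sqcap f g h,
      MFn.sqcap_sqcup_sqcap_le_sqcup_sqcap f g h⟩⟩

end

end StrongWeihrauch
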